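/- For every even p ≥ 2 and every even n ≥ p+2, there exists a simple graph on n vertices with degree sequence (n−1, p, p, …, p, p−1), having one vertex of degree n−1, n−2 vertices of degree p, and one vertex of degree p−1. -/

import Mathlib

open SimpleGraph Finset

/-- The multiset of vertex degrees of a finite simple graph. -/
def degMS {m : ℕ} (G : SimpleGraph (Fin m)) [DecidableRel G.Adj] : Multiset ℕ :=
  (Finset.univ : Finset (Fin m)).val.map fun v => G.degree v

/-- `G` contains `K_{p,1,1}` (complete tripartite with parts `p,1,1`) as a subgraph:
there are adjacent vertices `u, v` and `p` further vertices each adjacent to both. -/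
def ContainsKp11 {V : Type*} (G : SimpleGraph V) (p : ℕ) : Prop :=
  ∃ u v : V, G.Adj u v ∧ ∃ s : Finset V, s.card = p ∧ u ∉ s ∧ v ∉ s ∧
    ∀ w ∈ s, G.Adj u w ∧ G.Adj v w

/-!
Write `p = 2k + 2` and `n = m + 1` with `m` odd. On `ZMod m` the circulant graph with jumps
`±2, …, ±(k+1)` is `2k`-regular (the jumps are distinct since `2k + 2 < m`), and the matching
`{1,2}, {3,4}, …, {m-2, m-1}` uses only the unused difference `±1` and misses exactly `0`.
Adding one vertex adjacent to everything gives degrees `m`, then `2k + 1` at `0`, and `2k + 2`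
at the other `m - 1` vertices.
-/

open scoped Pointwise

theorem Finset.univ_val_map_eq_cons_cons_replicate {α β : Type*} [Fintype α] [DecidableEq α]
    (f : α → β) {a b : α} (hab : a ≠ b) {c : β} (hc : ∀ x, x ≠ a → x ≠ b → f x = c) :
    univ.val.map f = f a ::ₘ f b ::ₘ Multiset.replicate (Fintype.card α - 2) c := by
  have hb : b ∈ univ.erase a := mem_erase.2 ⟨hab.symm, mem_univ b⟩
  rw [← insert_erase (mem_univ a), ← insert_erase hb, insert_val_of_notMem (by simp [hab]),
    insert_val_of_notMem (by simp), Multiset.map_cons, Multiset.map_cons,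
    Multiset.map_congr rfl fun x hx => hc x (ne_of_mem_erase (mem_of_mem_erase hx))
      (ne_of_mem_erase hx), Multiset.map_const', ← card_def, card_erase_of_mem hb,
    card_erase_of_mem (mem_univ a), card_univ, Nat.sub_sub]

namespace SimpleGraph

variable {V : Type*}

theorem degree_sup_of_disjoint {G₁ G₂ : SimpleGraph V} (h : Disjoint G₁ G₂) (v : V)
    [Fintype ((G₁ ⊔ G₂).neighborSet v)] [Fintype (G₁.neighborSet v)]
    [Fintype (G₂.neighborSet v)] :
    (G₁ ⊔ G₂).degree v = G₁.degree v + G₂.degree v := by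
  simp only [← card_neighborFinset_eq_degree, neighborFinset_sup_of_disjoint v h,
    card_disjUnion]

def pairingGraph (σ : V → V) : SimpleGraph V := fromRel fun x y => y = σ x

theorem pairingGraph_adj {σ : V → V} (hσ : Function.Involutive σ) {x y : V} :
    (pairingGraph σ).Adj x y ↔ x ≠ y ∧ y = σ x := by
  simp only [pairingGraph, fromRel_adj]
  constructor
  · rintro ⟨hxy, rfl | rfl⟩
    · exact ⟨hxy, rfl⟩
    · exact ⟨hxy, (hσ y).symm⟩
  · rintro ⟨hxy, rfl⟩
    exact ⟨hxy, Or.inl rfl⟩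

theorem degree_pairingGraph [DecidableEq V] {σ : V → V} (hσ : Function.Involutive σ) (x : V)
    [Fintype ((pairingGraph σ).neighborSet x)] :
    (pairingGraph σ).degree x = if σ x = x then 0 else 1 := by
  have : (pairingGraph σ).neighborFinset x = ({σ x} : Finset V).filter (· ≠ x) := by
    ext y
    simp only [mem_neighborFinset, pairingGraph_adj hσ, mem_filter, mem_singleton]
    exact ⟨fun ⟨hxy, h⟩ => ⟨h, Ne.symm hxy⟩, fun ⟨h, hxy⟩ => ⟨Ne.symm hxy, h⟩⟩
  rw [← card_neighborFinset_eq_degree, this, filter_singleton]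
  split_ifs <;> simp_all

def cone (G : SimpleGraph V) : SimpleGraph (Option V) where
  Adj
    | some x, some y => G.Adj x y
    | none, none => False
    | _, _ => True
  symm := ⟨by rintro (_ | x) (_ | y) h <;> simp_all [G.adj_comm]⟩
  loopless := ⟨by rintro (_ | x) h <;> simp_all⟩

@[simp] theorem cone_adj_some_some {G : SimpleGraph V} {x y : V} :
    (cone G).Adj (some x) (some y) ↔ G.Adj x y := Iff.rfl

@[simp] theorem cone_adj_none {G : SimpleGraph V} {a : Option V} :
    (cone G).Adj none a ↔ a.isSome := by
  cases a <;> simp [cone]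

@[simp] theorem cone_adj_some_none {G : SimpleGraph V} {x : V} :
    (cone G).Adj (some x) none := trivial

variable (G : SimpleGraph V)

theorem degree_cone_none [Fintype V] [Fintype ((cone G).neighborSet none)] :
    (cone G).degree none = Fintype.card V := by
  have : (cone G).neighborFinset none = univ.map .some := by
    ext (_ | x) <;> simp
  rw [← card_neighborFinset_eq_degree, this, card_map, card_univ]

theorem degree_cone_some (v : V) [Fintype (G.neighborSet v)]
    [Fintype ((cone G).neighborSet (some v))] :
    (cone G).degree (some v) = G.degree v + 1 := by
  classical
  have : (cone G).neighborFinset (some v) = insert none ((G.neighborFinset v).map .some) := by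
    ext (_ | x) <;> simp
  rw [← card_neighborFinset_eq_degree, this, card_insert_of_notMem (by simp), card_map,
    card_neighborFinset_eq_degree]

theorem degree_circulantGraph {A : Type*} [AddCommGroup A] [DecidableEq A] {s : Finset A}
    (hs : -s = s) (h0 : (0 : A) ∉ s) (v : A)
    [Fintype ((circulantGraph (s : Set A)).neighborSet v)] :
    (circulantGraph (s : Set A)).degree v = #s := by
  have : (circulantGraph (s : Set A)).neighborFinset v = s.map (addLeftEmbedding v) := by
    ext w
    simp only [mem_neighborFinset, circulantGraph_adj, mem_map, addLeftEmbedding_apply, mem_coe]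
    constructor
    · rintro ⟨-, h | h⟩
      · exact ⟨w - v, by rwa [← hs, mem_neg', neg_sub], add_sub_cancel v w⟩
      · exact ⟨w - v, h, add_sub_cancel v w⟩
    · rintro ⟨d, hd, rfl⟩
      refine ⟨fun h => h0 ?_, Or.inr ?_⟩
      · rwa [left_eq_add.1 h] at hd
      · rwa [add_sub_cancel_left]
  rw [← card_neighborFinset_eq_degree, this, card_map]

theorem disjoint_circulantGraph_pairingGraph {A : Type*} [AddCommGroup A] [DecidableEq A]
    {s : Finset A} (hs : -s = s) {σ : A → A} (hσ : Function.Involutive σ)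
    (hσs : ∀ x, σ x - x ∉ s) : Disjoint (circulantGraph (s : Set A)) (pairingGraph σ) := by
  refine disjoint_left.2 fun x y hc hp => ?_
  obtain ⟨-, rfl⟩ := (pairingGraph_adj hσ).1 hp
  rcases hc.2 with h | h
  · rw [mem_coe, ← hs, mem_neg', neg_sub] at h
    exact hσs x h
  · exact hσs x h

end SimpleGraph

def oddEvenPartner (j : ℕ) : ℕ := if j = 0 then 0 else if j % 2 = 1 then j + 1 else j - 1

theorem oddEvenPartner_involutive : Function.Involutive oddEvenPartner := by
  intro j
  grind [oddEvenPartner]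

theorem oddEvenPartner_lt {m j : ℕ} (hm : Odd m) (hj : j < m) : oddEvenPartner j < m := by
  rw [Nat.odd_iff] at hm
  grind [oddEvenPartner]

theorem ZMod.intCast_injOn_Icc {m : ℕ} {a b : ℤ} (h : b - a < m) :
    Set.InjOn (Int.cast : ℤ → ZMod m) (Set.Icc a b) := by
  intro x hx y hy hxy
  rw [ZMod.intCast_eq_intCast_iff_dvd_sub] at hxy
  have := Int.eq_zero_of_abs_lt_dvd hxy <| abs_lt.2
    ⟨by linarith [hx.2, hy.1], by linarith [hx.1, hy.2]⟩
  omega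

namespace NearRegular

variable {m : ℕ}

def partner (m : ℕ) (x : ZMod m) : ZMod m := (oddEvenPartner x.val : ZMod m)

section Partner

variable [NeZero m] (hm : Odd m)
include hm

theorem val_partner (x : ZMod m) : (partner m x).val = oddEvenPartner x.val :=
  ZMod.val_cast_of_lt (oddEvenPartner_lt hm x.val_lt)

theorem partner_involutive : Function.Involutive (partner m) := by
  intro x
  rw [partner, val_partner hm, oddEvenPartner_involutive, ZMod.natCast_zmod_val]

theorem partner_eq_self_iff {x : ZMod m} : partner m x = x ↔ x = 0 := by
  rw [← (ZMod.val_injective m).eq_iff, val_partner hm, ← ZMod.val_eq_zero]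
  grind [oddEvenPartner]

omit hm in
theorem partner_sub_self (x : ZMod m) : ∃ d : ℤ, |d| ≤ 1 ∧ partner m x - x = d := by
  refine ⟨oddEvenPartner x.val - x.val, ?_, ?_⟩
  · rw [abs_le]
    grind [oddEvenPartner]
  · rw [partner]
    push_cast
    rw [ZMod.natCast_zmod_val]

end Partner

noncomputable def jumps (m k : ℕ) : Finset (ZMod m) :=
  (Icc (-(k + 1) : ℤ) (k + 1) \ Icc (-1) 1).image (↑)

theorem neg_jumps (m k : ℕ) : -jumps m k = jumps m k := by
  ext x
  simp only [jumps, mem_neg', mem_image, mem_sdiff, mem_Icc]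
  constructor
  · rintro ⟨d, hd, h⟩
    exact ⟨-d, by omega, by push_cast; rw [h, neg_neg]⟩
  · rintro ⟨d, hd, rfl⟩
    exact ⟨-d, by omega, by push_cast; rfl⟩

section Jumps

variable {k : ℕ} (hm : 2 * k + 3 ≤ m)
include hm

theorem intCast_injOn_Icc_jumps :
    Set.InjOn (Int.cast : ℤ → ZMod m) (Icc (-(k + 1) : ℤ) (k + 1)) := by
  rw [coe_Icc]
  exact ZMod.intCast_injOn_Icc (by omega)

theorem card_jumps : #(jumps m k) = 2 * k := by
  rw [jumps, card_image_of_injOn ((intCast_injOn_Icc_jumps hm).mono (by simp)),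
    card_sdiff_of_subset (Icc_subset_Icc (by omega) (by omega)), Int.card_Icc, Int.card_Icc]
  omega

theorem intCast_notMem_jumps {d : ℤ} (hd : |d| ≤ 1) : (d : ZMod m) ∉ jumps m k := by
  rw [abs_le] at hd
  simp only [jumps, mem_image, mem_sdiff, mem_Icc, not_exists, not_and]
  intro j hj hjd
  have := intCast_injOn_Icc_jumps hm (by simp only [coe_Icc, Set.mem_Icc]; omega)
    (by simp only [coe_Icc, Set.mem_Icc]; omega) hjd
  omega

end Jumps

abbrev graph (m k : ℕ) : SimpleGraph (Option (ZMod m)) :=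
  cone (circulantGraph (jumps m k : Set (ZMod m)) ⊔ pairingGraph (partner m))

variable [NeZero m] {k : ℕ}

theorem degree_graph_none [Fintype ((graph m k).neighborSet none)] :
    (graph m k).degree none = m := by
  rw [degree_cone_none, ZMod.card]

theorem degree_graph_some (hodd : Odd m) (hm : 2 * k + 3 ≤ m) (x : ZMod m)
    [Fintype ((graph m k).neighborSet (some x))] :
    (graph m k).degree (some x) = if x = 0 then 2 * k + 1 else 2 * k + 2 := by
  classical
  have hdisj := disjoint_circulantGraph_pairingGraph (neg_jumps m k) (partner_involutive hodd)
    fun x h => by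
      obtain ⟨d, hd, hx⟩ := partner_sub_self x
      exact intCast_notMem_jumps hm hd (hx ▸ h)
  have h0 : (0 : ZMod m) ∉ jumps m k := by simpa using intCast_notMem_jumps hm (d := 0) (by simp)
  rw [degree_cone_some, degree_sup_of_disjoint hdisj,
    degree_circulantGraph (neg_jumps m k) h0, card_jumps hm,
    degree_pairingGraph (partner_involutive hodd)]
  simp only [partner_eq_self_iff hodd]
  split_ifs <;> rfl

end NearRegular

open NearRegular in
theorem stmt_6 (p n : ℕ) (hpeven : Even p) (hp : 2 ≤ p) (hneven : Even n) (hn : p + 2 ≤ n) :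
    ∃ (H : SimpleGraph (Fin n)) (_ : DecidableRel H.Adj),
      degMS H = (n - 1) ::ₘ (p - 1) ::ₘ Multiset.replicate (n - 2) p := by
  classical
  obtain ⟨k, rfl⟩ : ∃ k, p = 2 * k + 2 := ⟨p / 2 - 1, by rcases hpeven with ⟨t, rfl⟩; omega⟩
  obtain ⟨m, rfl⟩ : ∃ m, n = m + 1 := ⟨n - 1, by omega⟩
  have hodd : Odd m := by
    rcases hneven with ⟨t, ht⟩
    exact ⟨t - 1, by omega⟩
  have : NeZero m := ⟨by omega⟩
  let e : Fin (m + 1) ≃ Option (ZMod m) := Fintype.equivOfCardEq (by simp)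
  have hdeg (w) : ((graph m k).comap e).degree (e.symm w) = (graph m k).degree w :=
    (Iso.comap e _).symm.degree_eq w
  refine ⟨(graph m k).comap e, inferInstance, ?_⟩
  rw [degMS, univ_val_map_eq_cons_cons_replicate _ (a := e.symm none) (b := e.symm (some 0))
    (c := 2 * k + 2) (by simp) ?_, hdeg, hdeg, degree_graph_none,
    degree_graph_some hodd (by omega), if_pos rfl, Fintype.card_fin]
  · rfl
  · intro v ha hb
    obtain ⟨_ | x, rfl⟩ := e.symm.surjective v
    · exact absurd rfl ha
    · rw [hdeg, degree_graph_some hodd (by omega), if_neg (by simpa using hb)]
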